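/- (Semi-Rigidity Theorem) Let B be a domain that is either an affine k-domain or finitely generated as a ring. Then B is rigid (admits no nontrivial exponential map) if and only if ML(B^[1]) = B, where B^[1] = B[X] is the polynomial ring in one variable over B. -/

import Mathlib

open Polynomial

variable (k : Type) [Field k] (B : Type) [CommRing B] [IsDomain B] [Algebra k B]

/-- An exponential map on a `k`-domain `B`. -/
def IsExpMap (δ : B →ₐ[k] B[X]) : Prop :=
  (∀ b : B, (δ b).eval 0 = b) ∧
  (∀ b : B, (δ b).map δ.toRingHom = (δ b).eval₂ (C.comp C) (C X + X))

/-- The trivial exponential map property. -/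
def IsTrivialExp (δ : B →ₐ[k] B[X]) : Prop := ∀ b : B, δ b = C b

/-- The ring of δ-invariants, as a subalgebra. -/
noncomputable def expInv (δ : B →ₐ[k] B[X]) : Subalgebra k B :=
  AlgHom.equalizer δ CAlgHom

/-- A local slice: an element of minimal positive δ-degree. -/
def IsLocalSlice (δ : B →ₐ[k] B[X]) (x : B) : Prop :=
  0 < (δ x).degree ∧ ∀ y : B, 0 < (δ y).degree → (δ x).degree ≤ (δ y).degree

/-- A slice: a local slice whose top iterative derivative is a unit. -/
def IsSlice (δ : B →ₐ[k] B[X]) (x : B) : Prop :=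
  IsLocalSlice k B δ x ∧ IsUnit ((δ x).coeff (δ x).natDegree)

/-- δ admits a slice. -/
def HasSlice (δ : B →ₐ[k] B[X]) : Prop := ∃ x : B, IsSlice k B δ x

/-- Makar-Limanov invariant. -/
noncomputable def ML : Subalgebra k B :=
  ⨅ δ ∈ {δ : B →ₐ[k] B[X] | IsExpMap k B δ}, expInv k B δ

/-- Makar-Limanov–Freudenburg invariant. -/
noncomputable def MLstar : Subalgebra k B :=
  ⨅ δ ∈ {δ : B →ₐ[k] B[X] | IsExpMap k B δ ∧ HasSlice k B δ}, expInv k B δ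

/-- Rigidity: every exponential map is trivial. -/
def IsRigid : Prop := ∀ δ : B →ₐ[k] B[X], IsExpMap k B δ → IsTrivialExp k B δ

/-- `B` has transcendence degree `n` over `k`. -/
def HasTrdeg (n : ℕ) : Prop := ∃ x : Fin n → B, IsTranscendenceBasis k x

/-!
The translation `X ↦ X + Y` of `B[X]` has invariant ring `B`, so `ML(B[X]) ⊆ B`; and an
exponential map of `B` extends to `B[X]` by fixing `X`, so `ML(B[X]) = B` forces `B` to be rigid.

Conversely, let `Δ` be an exponential map of `B[X]` moving some element of `B`. Give `X` the
weight `N` and the exponential variable `Y` the weight `-M`, where `M / N` is the steepest slope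
among the monomials of `Δ` on a finite generating set of `B` and on `X`; finite generation is what
makes this maximum exist. Taking parts of top weight turns the identities of `Δ` into those of an
exponential map of the associated graded ring `B[X]`. Comparing degrees forces the top part of
`Δ X` to be `X`, so the maximal slope is attained on a generator, and the top parts of `Δ` on `B`
form a nontrivial exponential map of `B`.
-/

namespace Polynomial

section Weight

variable {R : Type*} [Semiring R]

/-- The coefficient of `X ^ (e / N)`, read as `0` when `e / N` is not an integer. -/
def coeffDiv (N e : ℕ) (p : R[X]) : R := if N ∣ e then p.coeff (e / N) else 0

variable {M N : ℕ}

lemma coeffDiv_of_mul_eq {e t : ℕ} (hN : 0 < N) (h : N * t = e) (p : R[X]) :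
    coeffDiv N e p = p.coeff t := by
  subst h
  rw [coeffDiv, if_pos (dvd_mul_right N t), Nat.mul_div_cancel_left t hN]

lemma coeffDiv_eq_zero_of_lt {e e' : ℕ} {p : R[X]} (hp : p.natDegree ≤ e / N) (h : e < e') :
    coeffDiv N e' p = 0 := by
  unfold coeffDiv
  split_ifs with hd
  · refine coeff_eq_zero_of_natDegree_lt (hp.trans_lt (Nat.lt_of_mul_lt_mul_right (a := N) ?_))
    rw [Nat.div_mul_cancel hd]
    exact (Nat.div_mul_le_self e N).trans_lt h
  · rfl

lemma coeffDiv_mul (hN : 0 < N) {e₁ e₂ : ℕ} {p q : R[X]} (hp : p.natDegree ≤ e₁ / N)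
    (hq : q.natDegree ≤ e₂ / N) :
    coeffDiv N (e₁ + e₂) (p * q) = coeffDiv N e₁ p * coeffDiv N e₂ q := by
  by_cases h₁ : N ∣ e₁ <;> by_cases h₂ : N ∣ e₂
  · rw [coeffDiv, coeffDiv, coeffDiv, if_pos (dvd_add h₁ h₂), if_pos h₁, if_pos h₂,
      Nat.add_div_of_dvd_right h₁, coeff_mul_add_eq_of_natDegree_le hp hq]
  · simp only [coeffDiv, if_neg ((Nat.dvd_add_right h₁).not.mpr h₂), if_neg h₂, mul_zero]
  · simp only [coeffDiv, if_neg ((Nat.dvd_add_left h₂).not.mpr h₁), if_neg h₁, zero_mul]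
  · rw [show coeffDiv N e₁ p = 0 from if_neg h₁, zero_mul]
    -- the product has degree at most `⌊e₁/N⌋ + ⌊e₂/N⌋ < (e₁ + e₂)/N`
    refine coeffDiv_eq_zero_of_lt (e := N * (e₁ / N) + N * (e₂ / N)) ?_ ?_
    · rw [← mul_add, Nat.mul_div_cancel_left _ hN]
      exact natDegree_mul_le.trans (add_le_add hp hq)
    · exact add_lt_add_of_lt_of_le (Nat.mul_div_lt_iff_not_dvd.mpr h₁) (Nat.mul_div_le e₂ N)

@[simp]
lemma coeffDiv_zero (e : ℕ) : coeffDiv N e (0 : R[X]) = 0 := by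
  simp [coeffDiv]

lemma coeffDiv_add (e : ℕ) (p q : R[X]) :
    coeffDiv N e (p + q) = coeffDiv N e p + coeffDiv N e q := by
  unfold coeffDiv
  split_ifs <;> simp

lemma coeffDiv_natCast_mul (e n : ℕ) (p : R[X]) :
    coeffDiv N e ((n : R[X]) * p) = n * coeffDiv N e p := by
  unfold coeffDiv
  split_ifs <;> simp [coeff_natCast_mul]

lemma coeffDiv_sum {ι : Type*} (s : Finset ι) (e : ℕ) (f : ι → R[X]) :
    coeffDiv N e (∑ i ∈ s, f i) = ∑ i ∈ s, coeffDiv N e (f i) := by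
  unfold coeffDiv
  split_ifs <;> simp [finsetSum_coeff]

variable (M N) in
/-- Give the monomial `X ^ t * Y ^ j` of `R[X][Y]` the weight `N * t - M * j`: then
`WeightLE M N a u` says that all monomials of `u` have weight at most `a`. -/
def WeightLE (a : ℕ) (u : R[X][X]) : Prop :=
  ∀ j, (u.coeff j).natDegree ≤ (a + M * j) / N

lemma coeff_sum_support_monomial {S : Type*} [Semiring S] (u : S[X]) (c : ℕ → R)
    (hc : ∀ j, u.coeff j = 0 → c j = 0) (i : ℕ) :
    (∑ j ∈ u.support, monomial j (c j)).coeff i = c i := by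
  simp only [finsetSum_coeff, coeff_monomial, Finset.sum_ite_eq', mem_support_iff]
  split_ifs with h
  · rfl
  · exact (hc i (notMem_support_iff.mp h)).symm

variable (M N) in
/-- The part of `u : R[X][Y]` of weight exactly `a`, with `X` specialised to `1`. -/
noncomputable def weightForm (a : ℕ) : R[X][X] →+ R[X] where
  toFun u := ∑ j ∈ u.support, monomial j (coeffDiv N (a + M * j) (u.coeff j))
  map_zero' := by simp
  map_add' u v := by
    ext j
    rw [coeff_add, coeff_sum_support_monomial, coeff_sum_support_monomial,
      coeff_sum_support_monomial, coeff_add, coeffDiv_add] <;> intro i h <;> simp [h]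

lemma coeff_weightForm (a : ℕ) (u : R[X][X]) (j : ℕ) :
    (weightForm M N a u).coeff j = coeffDiv N (a + M * j) (u.coeff j) :=
  coeff_sum_support_monomial u (fun i => coeffDiv N (a + M * i) (u.coeff i))
    (fun i h => by simp [h]) j

lemma weightLE_iff (hN : 0 < N) {a : ℕ} {u : R[X][X]} :
    WeightLE M N a u ↔ ∀ j t, (u.coeff j).coeff t ≠ 0 → N * t ≤ a + M * j := by
  simp only [WeightLE, natDegree_le_iff_coeff_eq_zero, Nat.div_lt_iff_lt_mul hN]
  refine forall_congr' fun j => ⟨fun h t ht => ?_, fun h t ht => ?_⟩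
  · by_contra hlt
    exact ht (h t (by linarith))
  · by_contra hne
    linarith [h t hne]

lemma WeightLE.add {a : ℕ} {u v : R[X][X]} (hu : WeightLE M N a u) (hv : WeightLE M N a v) :
    WeightLE M N a (u + v) := fun j =>
  (natDegree_add_le _ _).trans (max_le (hu j) (hv j))

lemma WeightLE.neg {R : Type*} [Ring R] {a : ℕ} {u : R[X][X]} (hu : WeightLE M N a u) :
    WeightLE M N a (-u) :=
  fun j => by simpa using hu j

lemma WeightLE.mul {a b : ℕ} {u v : R[X][X]} (hu : WeightLE M N a u) (hv : WeightLE M N b v) :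
    WeightLE M N (a + b) (u * v) := by
  intro j
  rw [coeff_mul]
  refine natDegree_sum_le_of_forall_le _ _ fun x hx => ?_
  rw [Finset.HasAntidiagonal.mem_antidiagonal] at hx
  calc (u.coeff x.1 * v.coeff x.2).natDegree ≤ (a + M * x.1) / N + (b + M * x.2) / N :=
        natDegree_mul_le.trans (add_le_add (hu _) (hv _))
    _ ≤ (a + M * x.1 + (b + M * x.2)) / N := Nat.div_add_div_le_add_div
    _ = (a + b + M * j) / N := by rw [← hx]; ring_nf

lemma weightLE_C_C (r : R) : WeightLE M N 0 (C (C r)) := by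
  intro j
  rw [coeff_C]
  split_ifs <;> simp

lemma WeightLE.pow {a : ℕ} {u : R[X][X]} (hu : WeightLE M N a u) (m : ℕ) :
    WeightLE M N (m * a) (u ^ m) := by
  induction m with
  | zero => simpa using weightLE_C_C (M := M) (N := N) (1 : R)
  | succ m ih => rw [pow_succ, add_mul, one_mul]; exact ih.mul hu

lemma weightForm_eq_zero_of_lt {a b : ℕ} {u : R[X][X]} (hu : WeightLE M N a u) (h : a < b) :
    weightForm M N b u = 0 := by
  ext j
  rw [coeff_weightForm, coeff_zero]
  exact coeffDiv_eq_zero_of_lt (hu j) (by omega)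

lemma weightForm_mul (hN : 0 < N) {a b : ℕ} {u v : R[X][X]} (hu : WeightLE M N a u)
    (hv : WeightLE M N b v) :
    weightForm M N (a + b) (u * v) = weightForm M N a u * weightForm M N b v := by
  ext j
  rw [coeff_weightForm, coeff_mul, coeff_mul, coeffDiv_sum]
  refine Finset.sum_congr rfl fun x hx => ?_
  rw [Finset.HasAntidiagonal.mem_antidiagonal] at hx
  rw [coeff_weightForm, coeff_weightForm, ← coeffDiv_mul hN (hu _) (hv _), ← hx]
  ring_nf

lemma weightForm_C_C (r : R) : weightForm M N 0 (C (C r)) = C r := by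
  ext j
  rw [coeff_weightForm, coeff_C, coeff_C]
  split_ifs with h
  · simp [h, coeffDiv]
  · simp

lemma weightForm_pow (hN : 0 < N) {a : ℕ} {u : R[X][X]} (hu : WeightLE M N a u) (m : ℕ) :
    weightForm M N (m * a) (u ^ m) = weightForm M N a u ^ m := by
  induction m with
  | zero => simpa using weightForm_C_C (M := M) (N := N) (1 : R)
  | succ m ih => rw [pow_succ, pow_succ, add_mul, one_mul, weightForm_mul hN (hu.pow m) hu, ih]

lemma weightForm_hasseDeriv (a i : ℕ) (u : R[X][X]) :
    weightForm M N (a + M * i) (hasseDeriv i u) = hasseDeriv i (weightForm M N a u) := by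
  ext j
  rw [coeff_weightForm, hasseDeriv_coeff, hasseDeriv_coeff, coeff_weightForm,
    coeffDiv_natCast_mul]
  ring_nf

noncomputable def support₂ (u : R[X][X]) : Finset (ℕ × ℕ) :=
  u.support.biUnion fun j => (u.coeff j).support.image (Prod.mk j)

lemma mem_support₂ {u : R[X][X]} {x : ℕ × ℕ} :
    x ∈ u.support₂ ↔ (u.coeff x.1).coeff x.2 ≠ 0 := by
  constructor
  · simp only [support₂, Finset.mem_biUnion, Finset.mem_image, mem_support_iff]
    rintro ⟨j, -, t, ht, rfl⟩
    exact ht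
  · intro h
    simp only [support₂, Finset.mem_biUnion, Finset.mem_image, mem_support_iff]
    exact ⟨x.1, fun h' => h (by simp [h']), x.2, h, rfl⟩

lemma coeff_eval₂_C_comp_C_X_add_X (u : R[X]) (i : ℕ) :
    (u.eval₂ (C.comp C) (C X + X)).coeff i = hasseDeriv i u := by
  have h : u.eval₂ (C.comp C) (C X + X) = taylor X (u.map C) := by
    rw [taylor_apply, comp, eval₂_map, add_comm]
  have hmap : hasseDeriv i (u.map C) = (hasseDeriv i u).map C := by
    ext n : 1
    simp [hasseDeriv_coeff, coeff_map]
  rw [h, taylor_coeff, hmap, eval_map, eval₂_C_X]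

end Weight

end Polynomial

lemma exists_max_slope (S : Finset (ℕ × ℕ)) (hS : S.Nonempty) (hpos : ∀ x ∈ S, 0 < x.1) :
    ∃ x ∈ S, ∀ y ∈ S, x.1 * y.2 ≤ x.2 * y.1 := by
  obtain ⟨x, hx, hmax⟩ := S.exists_max_image (fun y => (y.2 : ℚ) / y.1) hS
  refine ⟨x, hx, fun y hy => ?_⟩
  have h := hmax y hy
  rw [div_le_div_iff₀ (by exact_mod_cast hpos y hy) (by exact_mod_cast hpos x hx)] at h
  exact_mod_cast (by linarith : (x.1 : ℚ) * y.2 ≤ x.2 * y.1)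

section ExpMap

variable {k} {A : Type} [CommRing A] [Algebra k A]

lemma isExpMap_iff (δ : A →ₐ[k] A[X]) :
    IsExpMap k A δ ↔
      (∀ b, (δ b).coeff 0 = b) ∧ ∀ b i, δ ((δ b).coeff i) = hasseDeriv i (δ b) := by
  simp only [IsExpMap, ← coeff_zero_eq_eval_zero, Polynomial.ext_iff (p := Polynomial.map _ _),
    coeff_map, coeff_eval₂_C_comp_C_X_add_X, AlgHom.toRingHom_eq_coe, RingHom.coe_coe]

lemma IsExpMap.coeff_zero {δ : A →ₐ[k] A[X]} (hδ : IsExpMap k A δ) (b : A) :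
    (δ b).coeff 0 = b :=
  ((isExpMap_iff δ).mp hδ).1 b

lemma IsExpMap.map_coeff {δ : A →ₐ[k] A[X]} (hδ : IsExpMap k A δ) (b : A) (i : ℕ) :
    δ ((δ b).coeff i) = hasseDeriv i (δ b) :=
  ((isExpMap_iff δ).mp hδ).2 b i

lemma mem_expInv {δ : A →ₐ[k] A[X]} {b : A} : b ∈ expInv k A δ ↔ δ b = C b :=
  AlgHom.mem_equalizer _ _ _

lemma ML_le_expInv {δ : A →ₐ[k] A[X]} (hδ : IsExpMap k A δ) :
    ML k A ≤ expInv k A δ :=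
  iInf₂_le δ hδ

end ExpMap

section LeadingExp

variable {k} {A : Type} [CommRing A] [Algebra k A] (Δ : A[X] →ₐ[k] A[X][X]) {M N : ℕ}

lemma map_C_algebraMap (c : k) : Δ (C (algebraMap k A c)) = C (C (algebraMap k A c)) := by
  rw [← Polynomial.algebraMap_apply, Δ.commutes, Polynomial.algebraMap_apply,
    Polynomial.algebraMap_apply]

noncomputable def leadingExp (hN : 0 < N) (hC : ∀ b : A, WeightLE M N 0 (Δ (C b))) :
    A →ₐ[k] A[X] where
  toFun b := weightForm M N 0 (Δ (C b))
  map_one' := by simpa using weightForm_C_C (M := M) (N := N) (1 : A)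
  map_mul' b b' := by
    rw [C_mul, map_mul]
    exact weightForm_mul hN (hC b) (hC b')
  map_zero' := by simp
  map_add' b b' := by simp
  commutes' c := by
    rw [map_C_algebraMap, weightForm_C_C, Polynomial.algebraMap_apply]

variable {Δ} (hN : 0 < N) (hC : ∀ b : A, WeightLE M N 0 (Δ (C b)))

lemma leadingExp_apply (b : A) : leadingExp Δ hN hC b = weightForm M N 0 (Δ (C b)) := rfl

lemma weightForm_map_eq (hX : WeightLE M N N (Δ X)) {p : A[X]} {a : ℕ}
    (hp : p.natDegree ≤ a / N) :
    weightForm M N a (Δ p) =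
      if N ∣ a then leadingExp Δ hN hC (p.coeff (a / N)) * weightForm M N N (Δ X) ^ (a / N)
      else 0 := by
  have hle : ∀ m ∈ p.support, m * N ≤ a := fun m hm =>
    (Nat.le_div_iff_mul_le hN).mp ((le_natDegree_of_mem_supp m hm).trans hp)
  have hterm : ∀ m, WeightLE M N (0 + m * N) (Δ (C (p.coeff m)) * Δ X ^ m) :=
    fun m => (hC _).mul (hX.pow m)
  conv_lhs => rw [p.as_sum_support_C_mul_X_pow]
  simp only [map_sum, map_mul, map_pow]
  split_ifs with hd
  · obtain ⟨q, rfl⟩ := hd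
    rw [Nat.mul_div_cancel_left q hN, Finset.sum_eq_single q]
    · rw [mul_comm N q, ← zero_add (q * N), weightForm_mul hN (hC _) (hX.pow q),
        weightForm_pow hN hX]
      rfl
    · intro m hm hmq
      refine weightForm_eq_zero_of_lt (hterm m) (lt_of_le_of_ne (by simpa using hle m hm) ?_)
      exact fun h => hmq (Nat.eq_of_mul_eq_mul_right hN (by simpa [mul_comm N q] using h))
    · intro hq
      simp [notMem_support_iff.mp hq]
  · refine Finset.sum_eq_zero fun m hm => weightForm_eq_zero_of_lt (hterm m) ?_
    exact lt_of_le_of_ne (by simpa using hle m hm) fun h =>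
      hd ⟨m, by simpa [mul_comm] using h.symm⟩

/-- The weight-`(a + M * i)` part of the identity `Δ ((Δ p).coeff i) = hasseDeriv i (Δ p)`. -/
lemma leadingExp_coeffDiv_mul_pow (hΔ : IsExpMap k A[X] Δ) (hX : WeightLE M N N (Δ X))
    {p : A[X]} {a : ℕ} (hp : WeightLE M N a (Δ p)) (i : ℕ) :
    leadingExp Δ hN hC (coeffDiv N (a + M * i) ((Δ p).coeff i)) *
        weightForm M N N (Δ X) ^ ((a + M * i) / N) =
      hasseDeriv i (weightForm M N a (Δ p)) := by
  rw [← weightForm_hasseDeriv, ← hΔ.map_coeff, weightForm_map_eq hN hC hX (hp i), coeffDiv]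
  split_ifs <;> simp

lemma coeff_zero_leadingExp (hΔ : IsExpMap k A[X] Δ) (b : A) :
    (leadingExp Δ hN hC b).coeff 0 = b := by
  rw [leadingExp_apply, coeff_weightForm, hΔ.coeff_zero, mul_zero, add_zero,
    coeffDiv_of_mul_eq hN (mul_zero N), coeff_C_zero]

end LeadingExp

section LeadingExpDomain

variable {k B} {Δ : B[X] →ₐ[k] B[X][X]} {M N : ℕ}

lemma weightForm_map_X_eq_one (hΔ : IsExpMap k B[X] Δ) (hN : 0 < N)
    (hC : ∀ b : B, WeightLE M N 0 (Δ (C b))) (hX : WeightLE M N N (Δ X)) :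
    weightForm M N N (Δ X) = 1 := by
  set H := weightForm M N N (Δ X) with hH
  have hH0 : H.coeff 0 = 1 := by
    rw [hH, coeff_weightForm, hΔ.coeff_zero, mul_zero, add_zero,
      coeffDiv_of_mul_eq hN (mul_one N), coeff_X_one]
  suffices hn : H.natDegree = 0 by rw [eq_C_of_natDegree_eq_zero hn, hH0, C_1]
  by_contra hn
  have hH_ne : H ≠ 0 := fun h => by simp [h] at hH0
  -- Comparing degrees in the identity at `i = deg H`: the left side has degree at least
  -- `deg H`, the right side is the constant `hasseDeriv (deg H) H`.
  have key := leadingExp_coeffDiv_mul_pow hN hC hΔ hX hX H.natDegree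
  rw [← coeff_weightForm, ← hH, hasseDeriv_natDegree_eq_C] at key
  have hc : leadingExp Δ hN hC (H.coeff H.natDegree) ≠ 0 := fun h => by
    have h0 := coeff_zero_leadingExp hN hC hΔ (H.coeff H.natDegree)
    rw [h, coeff_zero] at h0
    exact leadingCoeff_ne_zero.mpr hH_ne h0.symm
  have hdeg := congrArg natDegree key
  rw [natDegree_C, natDegree_mul hc (pow_ne_zero _ hH_ne), natDegree_pow] at hdeg
  have he : 0 < (N + M * H.natDegree) / N := Nat.div_pos (by omega) hN
  have := Nat.mul_eq_zero.mp (Nat.eq_zero_of_add_eq_zero_left hdeg)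
  omega

lemma isExpMap_leadingExp (hΔ : IsExpMap k B[X] Δ) (hN : 0 < N)
    (hC : ∀ b : B, WeightLE M N 0 (Δ (C b))) (hX : WeightLE M N N (Δ X)) :
    IsExpMap k B (leadingExp Δ hN hC) := by
  refine (isExpMap_iff _).mpr ⟨coeff_zero_leadingExp hN hC hΔ, fun b i => ?_⟩
  have key := leadingExp_coeffDiv_mul_pow hN hC hΔ hX (hC b) i
  rwa [weightForm_map_X_eq_one hΔ hN hC hX, one_pow, mul_one, ← coeff_weightForm] at key

lemma coeff_coeff_map_C_eq_zero_of_isRigid (hrig : IsRigid k B) (hΔ : IsExpMap k B[X] Δ)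
    (hN : 0 < N) (hC : ∀ b : B, WeightLE M N 0 (Δ (C b))) (hX : WeightLE M N N (Δ X)) (b : B)
    {j t : ℕ} (hj : 0 < j) (h : N * t = M * j) : ((Δ (C b)).coeff j).coeff t = 0 := by
  have := congrArg (coeff · j) (hrig _ (isExpMap_leadingExp hΔ hN hC hX) b)
  simpa [leadingExp_apply, coeff_weightForm, coeffDiv_of_mul_eq hN h, coeff_C, hj.ne'] using this

lemma coeff_coeff_map_X_eq_zero (hΔ : IsExpMap k B[X] Δ) (hN : 0 < N)
    (hC : ∀ b : B, WeightLE M N 0 (Δ (C b))) (hX : WeightLE M N N (Δ X)) {j t : ℕ}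
    (hj : 0 < j) (h : N * t = N + M * j) : ((Δ X).coeff j).coeff t = 0 := by
  have := congrArg (coeff · j) (weightForm_map_X_eq_one hΔ hN hC hX)
  simpa [coeff_weightForm, coeffDiv_of_mul_eq hN h, coeff_one, hj.ne'] using this

end LeadingExpDomain

section Generators

variable {k} {A : Type} [CommRing A] [Algebra k A]

lemma exists_finset_closure_eq_top (hfg : Algebra.FiniteType k A ∨ Algebra.FiniteType ℤ A) :
    ∃ s : Finset A, Subring.closure (Set.range (algebraMap k A) ∪ s) = ⊤ := by
  rcases hfg with hfg | hfg
  · obtain ⟨s, hs⟩ := hfg.out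
    exact ⟨s, by rw [← Algebra.adjoin_eq_ring_closure, hs, Algebra.top_toSubring]⟩
  · obtain ⟨s, hs⟩ := hfg.out
    refine ⟨s, eq_top_iff.mpr ?_⟩
    rw [← Algebra.top_toSubring (R := ℤ), ← hs, Algebra.adjoin_eq_ring_closure]
    refine Subring.closure_le.mpr
      (Set.union_subset ?_ fun x hx => Subring.subset_closure (Or.inr hx))
    rintro _ ⟨n, rfl⟩
    exact intCast_mem _ n

variable {Δ : A[X] →ₐ[k] A[X][X]} {s : Finset A}

lemma weightLE_of_closure_eq_top (hs : Subring.closure (Set.range (algebraMap k A) ∪ s) = ⊤)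
    {M N : ℕ} (h : ∀ g ∈ s, WeightLE M N 0 (Δ (C g))) (b : A) :
    WeightLE M N 0 (Δ (C b)) := by
  have hb : b ∈ Subring.closure (Set.range (algebraMap k A) ∪ s) := hs ▸ Subring.mem_top b
  induction hb using Subring.closure_induction with
  | mem x hx =>
    rcases hx with ⟨c, rfl⟩ | hx
    · rw [map_C_algebraMap]
      exact weightLE_C_C _
    · exact h x hx
  | zero => simpa using weightLE_C_C (M := M) (N := N) (0 : A)
  | one => simpa using weightLE_C_C (M := M) (N := N) (1 : A)
  | add x y _ _ hx hy => rw [C_add, map_add]; exact hx.add hy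
  | neg x _ hx => rw [C_neg, map_neg]; exact hx.neg
  | mul x y _ _ hx hy => rw [C_mul, map_mul]; exact hx.mul hy

lemma map_C_eq_of_closure_eq_top (hs : Subring.closure (Set.range (algebraMap k A) ∪ s) = ⊤)
    (h : ∀ g ∈ s, Δ (C g) = C (C g)) (b : A) :
    Δ (C b) = C (C b) :=
  RingHom.eqOn_set_closure (f := (Δ : A[X] →+* A[X][X]).comp C) (g := C.comp C)
    (by rintro x (⟨c, rfl⟩ | hx); exacts [map_C_algebraMap Δ c, h x hx])
    (hs ▸ Subring.mem_top b)

end Generators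

section Invariance

variable {k} {A : Type} [CommRing A] [Algebra k A] {Δ : A[X] →ₐ[k] A[X][X]}

lemma exists_coeff_coeff_ne_zero (hΔ : IsExpMap k A[X] Δ) {g : A} (hg : Δ (C g) ≠ C (C g)) :
    ∃ j t, 0 < j ∧ ((Δ (C g)).coeff j).coeff t ≠ 0 := by
  by_contra! h
  refine hg (Polynomial.ext fun j => ?_)
  rcases Nat.eq_zero_or_pos j with rfl | hj
  · rw [hΔ.coeff_zero, coeff_C_zero]
  · ext t
    rw [h j t hj, coeff_C, if_neg hj.ne', coeff_zero]

lemma weightLE_map_C_of_slope (hΔ : IsExpMap k A[X] Δ) {M N : ℕ} (hN : 0 < N) {g : A}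
    (h : ∀ j t, 0 < j → ((Δ (C g)).coeff j).coeff t ≠ 0 → N * t ≤ M * j) :
    WeightLE M N 0 (Δ (C g)) := by
  refine (weightLE_iff hN).mpr fun j t hjt => ?_
  rcases Nat.eq_zero_or_pos j with rfl | hj
  · rw [hΔ.coeff_zero, coeff_C] at hjt
    have : t = 0 := by by_contra ht; exact hjt (if_neg ht)
    simp [this]
  · simpa using h j t hj hjt

lemma weightLE_map_X_of_slope (hΔ : IsExpMap k A[X] Δ) {M N : ℕ} (hN : 0 < N)
    (h : ∀ j t, 0 < j → ((Δ X).coeff j).coeff (t + 1) ≠ 0 → N * t ≤ M * j) :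
    WeightLE M N N (Δ X) := by
  refine (weightLE_iff hN).mpr fun j t hjt => ?_
  rcases Nat.eq_zero_or_pos j with rfl | hj
  · rw [hΔ.coeff_zero, coeff_X] at hjt
    have : t = 1 := by by_contra ht; exact hjt (if_neg (Ne.symm ht))
    simp [this]
  · obtain _ | t := t
    · simp
    · linarith [h j t hj hjt]

lemma exists_weight (hΔ : IsExpMap k A[X] Δ) {s : Finset A} {g : A} (hg : g ∈ s)
    (hne : Δ (C g) ≠ C (C g)) :
    ∃ M N, 0 < N ∧ (∀ g ∈ s, WeightLE M N 0 (Δ (C g))) ∧ WeightLE M N N (Δ X) ∧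
      ((∃ g ∈ s, ∃ j t, 0 < j ∧ N * t = M * j ∧ ((Δ (C g)).coeff j).coeff t ≠ 0) ∨
        ∃ j t, 0 < j ∧ N * t = N + M * j ∧ ((Δ X).coeff j).coeff t ≠ 0) := by
  classical
  -- `M / N` is the steepest slope `t / j` among the monomials `X ^ t * Y ^ j` (`j > 0`) of the
  -- `Δ (C g)`, and `(t - 1) / j` among those of `Δ X`.
  set P := (s.biUnion fun g => (Δ (C g)).support₂).filter (0 < ·.1) with hP
  set Q := ((Δ X).support₂.filter fun x => 0 < x.1 ∧ 0 < x.2).image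
    fun x => (x.1, x.2 - 1) with hQ
  have memP : ∀ {g j t}, g ∈ s → 0 < j → ((Δ (C g)).coeff j).coeff t ≠ 0 →
      (j, t) ∈ P :=
    fun hg hj ht => by
      simp only [hP, Finset.mem_filter, Finset.mem_biUnion, mem_support₂]
      exact ⟨⟨_, hg, ht⟩, hj⟩
  have memQ : ∀ {j t}, 0 < j → ((Δ X).coeff j).coeff (t + 1) ≠ 0 → (j, t) ∈ Q :=
    fun hj ht => by
      simp only [hQ, Finset.mem_image, Finset.mem_filter, mem_support₂]
      exact ⟨(_, _ + 1), ⟨ht, hj, Nat.succ_pos _⟩, rfl⟩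
  have hpos : ∀ x ∈ P ∪ Q, 0 < x.1 := by
    simp only [hP, hQ, Finset.mem_union, Finset.mem_filter, Finset.mem_image]
    rintro x (⟨-, hx⟩ | ⟨y, ⟨-, hy, -⟩, rfl⟩) <;> assumption
  obtain ⟨j₀, t₀, hj₀, ht₀⟩ := exists_coeff_coeff_ne_zero hΔ hne
  obtain ⟨⟨N, M⟩, hx, hmax⟩ :=
    exists_max_slope (P ∪ Q) ⟨_, Finset.mem_union_left _ (memP hg hj₀ ht₀)⟩ hpos
  have hN : 0 < N := hpos _ hx
  refine ⟨M, N, hN,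
    fun g hg => weightLE_map_C_of_slope hΔ hN fun j t hj ht =>
      hmax (j, t) (Finset.mem_union_left _ (memP hg hj ht)),
    weightLE_map_X_of_slope hΔ hN fun j t hj ht =>
      hmax (j, t) (Finset.mem_union_right _ (memQ hj ht)), ?_⟩
  simp only [hP, hQ, Finset.mem_union, Finset.mem_filter, Finset.mem_biUnion, Finset.mem_image,
    mem_support₂, Prod.mk.injEq] at hx
  rcases hx with ⟨⟨g, hg, hne⟩, -⟩ | ⟨⟨j, _ | t⟩, ⟨hne, -, ht⟩, rfl, rfl⟩
  · exact Or.inl ⟨g, hg, N, M, hN, mul_comm N M, hne⟩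
  · exact absurd ht (lt_irrefl 0)
  · exact Or.inr ⟨j, t + 1, hN, by simp only [Nat.add_sub_cancel]; ring, hne⟩

end Invariance

variable {k B} in
lemma map_C_eq_of_isRigid (hfg : Algebra.FiniteType k B ∨ Algebra.FiniteType ℤ B)
    (hrig : IsRigid k B) {Δ : B[X] →ₐ[k] B[X][X]} (hΔ : IsExpMap k B[X] Δ) (b : B) :
    Δ (C b) = C (C b) := by
  obtain ⟨s, hs⟩ := exists_finset_closure_eq_top hfg
  refine map_C_eq_of_closure_eq_top hs (fun g hg => ?_) b
  by_contra hne
  obtain ⟨M, N, hN, hCs, hX, hbd⟩ := exists_weight hΔ hg hne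
  have hC := weightLE_of_closure_eq_top hs hCs
  rcases hbd with ⟨g', -, j, t, hj, h, hne'⟩ | ⟨j, t, hj, h, hne'⟩
  · exact hne' (coeff_coeff_map_C_eq_zero_of_isRigid hrig hΔ hN hC hX g' hj h)
  · exact hne' (coeff_coeff_map_X_eq_zero hΔ hN hC hX hj h)

section Translation

variable {A : Type} [CommRing A] [Algebra k A]

noncomputable def translation : A[X] →ₐ[k] A[X][X] :=
  (aeval (C X + X)).restrictScalars k

variable {k}

lemma coeff_translation (p : A[X]) (i : ℕ) : (translation k p).coeff i = hasseDeriv i p := by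
  rw [← coeff_eval₂_C_comp_C_X_add_X]
  rfl

lemma isExpMap_translation : IsExpMap k A[X] (translation k) := by
  refine (isExpMap_iff _).mpr ⟨fun p => by rw [coeff_translation, hasseDeriv_zero'],
    fun p i => Polynomial.ext fun j => ?_⟩
  rw [coeff_translation, hasseDeriv_coeff, coeff_translation, ← LinearMap.comp_apply,
    hasseDeriv_comp, Nat.choose_symm_add, LinearMap.smul_apply, nsmul_eq_mul, coeff_translation]

lemma mem_range_of_translation_eq {p : A[X]} (h : translation k p = C p) :
    p ∈ (CAlgHom : A →ₐ[k] A[X]).range := by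
  have hn : p.natDegree = 0 := by
    by_contra hn
    have := congrArg (coeff · p.natDegree) h
    simp only [coeff_translation, hasseDeriv_natDegree_eq_C, coeff_C, if_neg hn, C_eq_zero,
      leadingCoeff_eq_zero] at this
    exact hn (by rw [this, natDegree_zero])
  exact ⟨p.coeff 0, (eq_C_of_natDegree_eq_zero hn).symm⟩

lemma ML_le_range : ML k A[X] ≤ (CAlgHom : A →ₐ[k] A[X]).range :=
  (ML_le_expInv isExpMap_translation).trans fun _ hp =>
    mem_range_of_translation_eq (mem_expInv.mp hp)

end Translation

section Extension

variable {k} {A : Type} [CommRing A] [Algebra k A] (δ : A →ₐ[k] A[X])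

/-- `δ` on the coefficients and the identity on `X`; the exponential variable is the outer one. -/
noncomputable def extendX : A[X] →ₐ[k] A[X][X] :=
  (Bivariate.swap.toAlgHom.restrictScalars k).comp (mapAlgHom δ)

lemma coeff_coeff_extendX (p : A[X]) (i j : ℕ) :
    ((extendX δ p).coeff i).coeff j = (δ (p.coeff j)).coeff i := by
  induction p using Polynomial.induction_on' with
  | add p q hp hq => simp [hp, hq]
  | monomial n c =>
    simp only [extendX, AlgHom.coe_comp, AlgHom.coe_restrictScalars', AlgEquiv.coe_toAlgHom,
      coe_mapAlgHom, Function.comp_apply, map_monomial, RingHom.coe_coe, Bivariate.swap_monomial,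
      map_pow, coeff_monomial]
    rw [← C_pow, coeff_mul_C, coeff_map, coeff_C_mul_X_pow]
    split_ifs <;> simp_all

variable {δ}

lemma isExpMap_extendX (hδ : IsExpMap k A δ) : IsExpMap k A[X] (extendX δ) := by
  refine (isExpMap_iff _).mpr ⟨fun p => ?_, fun p i => ?_⟩
  · ext j
    rw [coeff_coeff_extendX, hδ.coeff_zero]
  · ext l j
    rw [coeff_coeff_extendX, coeff_coeff_extendX, hδ.map_coeff, hasseDeriv_coeff, hasseDeriv_coeff,
      coeff_natCast_mul, coeff_coeff_extendX]

lemma isRigid_of_ML_eq (h : ML k A[X] = (CAlgHom : A →ₐ[k] A[X]).range) : IsRigid k A := by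
  intro δ hδ b
  have hb := ML_le_expInv (isExpMap_extendX hδ) (h ▸ ⟨b, rfl⟩ : C b ∈ ML k A[X])
  ext i : 1
  have := congrArg (fun u => (u.coeff i).coeff 0) (mem_expInv.mp hb)
  simp only [coeff_coeff_extendX, coeff_C_zero] at this
  rw [this, coeff_C, coeff_C]
  split_ifs <;> simp

end Extension

theorem semi_rigidity (hfg : Algebra.FiniteType k B ∨ Algebra.FiniteType ℤ B) :
    IsRigid k B ↔ ML k B[X] = (CAlgHom : B →ₐ[k] B[X]).range := by
  refine ⟨fun hrig => le_antisymm ML_le_range ?_, isRigid_of_ML_eq⟩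
  refine le_iInf₂ fun Δ hΔ => ?_
  rintro _ ⟨b, rfl⟩
  exact mem_expInv.mpr (map_C_eq_of_isRigid hfg hrig hΔ b)
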